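/- arXiv:2004.03107 — 2 statements merged into one kernel-verified Lean document; each statement's English description precedes it below -/
import Mathlib

section
/- The data externality imposed on consumer i equals DE_i(S) = (1/2)(G(S) - G(S_i)) - (3/8)G(S_{-i}), i.e., U_i(S, S_{-i}) - U_i(S_i, ∅) = (1/2)·var[E[w_i|S]] - (1/2)·var[E[w_i|S_i]] - (3/8)·var[E[w_i|S_{-i}]]. -/
/-!
Every conditional expectation of `w` has mean `E[w]`, so its second moment is its variance
plus `E[w]²`, while `E[w | ⊥]` is the constant `E[w]`. Expanding both surpluses this way, the
`E[w]²` terms enter with weights `1/2 - 3/8 - 1/2 + 3/8 = 0`.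
-/

open MeasureTheory ProbabilityTheory

section

variable {Ω : Type*} {m m0 : MeasurableSpace Ω} {μ : Measure Ω}

lemma integral_sq_sub_const_mul_sq {f g : Ω → ℝ} (hf : MemLp f 2 μ) (hg : MemLp g 2 μ)
    (c : ℝ) :
    ∫ ω, (f ω ^ 2 - c * g ω ^ 2) ∂μ = ∫ ω, f ω ^ 2 ∂μ - c * ∫ ω, g ω ^ 2 ∂μ := by
  rw [integral_sub hf.integrable_sq (hg.integrable_sq.const_mul c), integral_const_mul]

variable [IsProbabilityMeasure μ] {w : Ω → ℝ}

lemma integral_condExp_sq (hm : m ≤ m0) (hw : MemLp w 2 μ) :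
    ∫ ω, (μ[w|m]) ω ^ 2 ∂μ = variance (μ[w|m]) μ + (∫ ω, w ω ∂μ) ^ 2 := by
  rw [variance_eq_sub (hw.condExp one_le_two), integral_condExp hm]
  simp only [Pi.pow_apply]
  ring

lemma integral_condExp_bot_sq :
    ∫ ω, (μ[w|(⊥ : MeasurableSpace Ω)]) ω ^ 2 ∂μ = (∫ ω, w ω ∂μ) ^ 2 := by
  simp [condExp_bot]

end

/-- The data externality imposed on consumer `i`:
with `U_i(Y_i,Y) = (1/2)·E[(E[w|Y_i])² - (3/4)(E[w|Y])²]`,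
`DE_i(S) = U_i(S, S_{-i}) - U_i(S_i, ∅)
 = (1/2)var[E[w|S]] - (1/2)var[E[w|S_i]] - (3/8)var[E[w|S_{-i}]]`. -/
theorem data_externality_formula
    {Ω : Type*} [m0 : MeasurableSpace Ω] (μ : Measure Ω) [IsProbabilityMeasure μ]
    (mS mSmi mSi : MeasurableSpace Ω)
    (hmS : mS ≤ m0) (hmSmi : mSmi ≤ mS) (hmSi : mSi ≤ mS)
    (w : Ω → ℝ) (hw : MemLp w 2 μ) :
    (1 / 2) * ∫ ω, ((μ[w|mS]) ω ^ 2 - (3 / 4) * (μ[w|mSmi]) ω ^ 2) ∂μ -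
      (1 / 2) * ∫ ω, ((μ[w|mSi]) ω ^ 2
        - (3 / 4) * (μ[w|(⊥ : MeasurableSpace Ω)]) ω ^ 2) ∂μ =
    (1 / 2) * variance (μ[w|mS]) μ - (1 / 2) * variance (μ[w|mSi]) μ
      - (3 / 8) * variance (μ[w|mSmi]) μ := by
  have hL2 (m : MeasurableSpace Ω) : MemLp (μ[w|m]) 2 μ := hw.condExp one_le_two
  rw [integral_sq_sub_const_mul_sq (hL2 _) (hL2 _) _,
    integral_sq_sub_const_mul_sq (hL2 _) (hL2 _) _,
    integral_condExp_sq hmS hw, integral_condExp_sq (hmSmi.trans hmS) hw,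
    integral_condExp_sq (hmSi.trans hmS) hw, integral_condExp_bot_sq]
  ring
end

section
/- The intermediary's per-consumer profit with added common noise of variance σ_ε² equals R = (3(N-1)N σ_θ⁴)/(8((N-1)(σ_ε²+σ_θ²) + σ_{εi}² + σ_{θi}²)) - ((Nσ_θ² + σ_{θi}²)²)/(8(N(σ_ε²+σ_θ²) + σ_{εi}² + σ_{θi}²)), and if N(√3-1)σ_θ² < σ_{θi}², then R ≤ 0 for all σ_ε², σ_{εi}² ≥ 0. -/
/-- The intermediary's profit with added common noise of variance `σ_ε²`:
with `vθ = σ_θ²`, `vθi = σ_{θi}²`, `vε = σ_ε²`, `vεi = σ_{εi}²`, the profit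
`R = 3(N-1)Nσ_θ⁴/(8((N-1)(σ_ε²+σ_θ²)+σ_{εi}²+σ_{θi}²))
   - (Nσ_θ²+σ_{θi}²)²/(8(N(σ_ε²+σ_θ²)+σ_{εi}²+σ_{θi}²))`
equals `N·((3/8)var[E[w_i|X_{-i}]] - (1/8)var[E[w_i|X]])` (with the variances of
the conditional expectations computed from the stated linear formulas), and if
`N(√3-1)σ_θ² < σ_{θi}²` then `R ≤ 0` for all `σ_ε², σ_{εi}² ≥ 0`. -/
theorem noisy_profit_formula_and_sign
    (N : ℕ) (hN : 2 ≤ N) (vθ vθi vε vεi : ℝ)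
    (h1 : 0 ≤ vθ) (h2 : 0 ≤ vθi) (h3 : 0 ≤ vε) (h4 : 0 ≤ vεi) :
    (3 * ((N : ℝ) - 1) * (N : ℝ) * vθ ^ 2 / (8 * (((N : ℝ) - 1) * (vε + vθ) + vεi + vθi))
        - ((N : ℝ) * vθ + vθi) ^ 2 / (8 * ((N : ℝ) * (vε + vθ) + vεi + vθi)) =
      (N : ℝ) * ((3 / 8) * (((N : ℝ) - 1) * vθ ^ 2 / (((N : ℝ) - 1) * (vε + vθ) + vεi + vθi))
        - (1 / 8) * (((N : ℝ) * vθ + vθi) ^ 2 /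
            ((N : ℝ) * ((N : ℝ) * (vε + vθ) + vεi + vθi))))) ∧
    ((N : ℝ) * (Real.sqrt 3 - 1) * vθ < vθi →
      3 * ((N : ℝ) - 1) * (N : ℝ) * vθ ^ 2 / (8 * (((N : ℝ) - 1) * (vε + vθ) + vεi + vθi))
        - ((N : ℝ) * vθ + vθi) ^ 2 / (8 * ((N : ℝ) * (vε + vθ) + vεi + vθi)) ≤ 0) := by
  have hNpos : (0:ℝ) < (N:ℝ) := by
    exact_mod_cast Nat.lt_of_lt_of_le Nat.zero_lt_two hN
  have hN0 : (N : ℝ) ≠ 0 := ne_of_gt hNpos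
  have hN2 : (2:ℝ) ≤ (N:ℝ) := by exact_mod_cast hN
  have key : ∀ x D : ℝ, (N : ℝ) * (x / ((N : ℝ) * D)) = x / D := by
    intro x D
    rw [← mul_div_assoc, mul_div_mul_left _ _ hN0]
  have e8 : ∀ x D : ℝ, x / (8 * D) = (1/8) * (x / D) := by
    intro x D
    rw [mul_comm (8:ℝ) D, ← div_div]
    ring
  constructor
  · linear_combination
      e8 (3 * ((N : ℝ) - 1) * (N : ℝ) * vθ ^ 2) (((N : ℝ) - 1) * (vε + vθ) + vεi + vθi)
      - e8 (((N : ℝ) * vθ + vθi) ^ 2) ((N : ℝ) * (vε + vθ) + vεi + vθi)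
      + (1/8 : ℝ) * key (((N : ℝ) * vθ + vθi) ^ 2) ((N : ℝ) * (vε + vθ) + vεi + vθi)
  · intro hlt
    rcases eq_or_lt_of_le h1 with hv0 | hv0
    · subst hv0
      have h0 : 0 ≤ vθi ^ 2 / (8 * ((N : ℝ) * vε + vεi + vθi)) := by positivity
      simp only [ne_eq, OfNat.ofNat_ne_zero, not_false_iff, zero_pow, mul_zero, zero_div,
        add_zero]
      rw [zero_sub, neg_nonpos, show ((0:ℝ) + vθi) ^ 2 = vθi ^ 2 from by ring]
      exact h0
    · have hD1 : (0:ℝ) < 8 * (((N : ℝ) - 1) * (vε + vθ) + vεi + vθi) := by nlinarith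
      have hD2 : (0:ℝ) < 8 * ((N : ℝ) * (vε + vθ) + vεi + vθi) := by nlinarith
      rw [sub_nonpos, div_le_div_iff₀ hD1 hD2]
      have hs3 : Real.sqrt 3 ^ 2 = 3 := Real.sq_sqrt (by norm_num)
      have hs3' : (0:ℝ) ≤ Real.sqrt 3 := Real.sqrt_nonneg 3
      have hkey : 3 * (N:ℝ)^2 * vθ^2 ≤ ((N : ℝ) * vθ + vθi) ^ 2 := by
        have h5 : Real.sqrt 3 * ((N:ℝ) * vθ) < (N:ℝ) * vθ + vθi := by nlinarith
        have h6 : (0:ℝ) ≤ Real.sqrt 3 * ((N:ℝ) * vθ) := by positivity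
        nlinarith
      have hc : 0 ≤ ((N : ℝ) * vθ + vθi) ^ 2 - 3 * (N:ℝ)^2 * vθ^2 := sub_nonneg.mpr hkey
      have hS : 0 ≤ vε + vθ := by linarith
      have hT : 0 ≤ vεi + vθi := by linarith
      have hN1 : (0:ℝ) ≤ (N:ℝ) - 1 := by linarith
      have t1 : 0 ≤ ((N:ℝ) - 1) * (N:ℝ) * (vε + vθ) *
          (((N : ℝ) * vθ + vθi) ^ 2 - 3 * (N:ℝ)^2 * vθ^2) :=
        mul_nonneg (mul_nonneg (mul_nonneg hN1 hNpos.le) hS) hc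
      have t2 : 0 ≤ ((N:ℝ) - 1) * (vεi + vθi) *
          (((N : ℝ) * vθ + vθi) ^ 2 - 3 * (N:ℝ)^2 * vθ^2) :=
        mul_nonneg (mul_nonneg hN1 hT) hc
      have t3 : 0 ≤ (vεi + vθi) * ((N : ℝ) * vθ + vθi) ^ 2 :=
        mul_nonneg hT (sq_nonneg _)
      nlinarith [t1, t2, t3, hNpos, mul_pos hNpos hNpos]
end
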